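/- Let A be a real tensor of size n×n×n₃, invertible with inverse A⁻¹, let E be a tensor of size n×n×n₃ with ‖A⁻¹‖₂·‖E‖₂ < 1, and suppose B = A+E (entrywise sum) is invertible with inverse B⁻¹. Then, with γ = 1 − ‖A⁻¹‖₂·‖E‖₂, one has ‖B⁻¹−A⁻¹‖_F ≤ (‖A⁻¹‖₂·‖E‖₂/γ)·‖A⁻¹‖_F and ‖B⁻¹−A⁻¹‖₂ ≤ (‖A⁻¹‖₂·‖E‖₂/γ)·‖A⁻¹‖₂. -/

import Mathlib

/-!
Passing to block circulant matrices turns the t-product into the matrix product and the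
tensor spectral norm into the operator norm, so the statement becomes the classical
perturbation bound for inverses in a normed ring: from `A A⁻¹ = 1` and `B⁻¹ (A + E) = 1` one gets
`B⁻¹ - A⁻¹ = -B⁻¹ E A⁻¹`, hence `‖B⁻¹‖ ≤ ‖A⁻¹‖ + ‖B⁻¹‖ ‖E‖ ‖A⁻¹‖`, i.e.
`‖B⁻¹‖ ‖E‖ ≤ ‖A⁻¹‖ ‖E‖ / (1 - ‖A⁻¹‖ ‖E‖)`. For the Frobenius norm one also needs
`‖C * X‖_F ≤ ‖C‖₂ ‖X‖_F`, which holds lateral slice by lateral slice because a slice of `C * X`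
is `bcirc C` applied to the corresponding slice of `X`.
-/

open scoped Matrix.Norms.L2Operator

noncomputable section

/-- The t-product of third-order tensors. -/
def tProd {n₁ n₂ n₃ n₄ : ℕ} [NeZero n₃] (A : Fin n₁ → Fin n₂ → ZMod n₃ → ℝ)
    (B : Fin n₂ → Fin n₄ → ZMod n₃ → ℝ) : Fin n₁ → Fin n₄ → ZMod n₃ → ℝ :=
  fun i j k => ∑ l : Fin n₂, ∑ m : ZMod n₃, A i l (k - m) * B l j m

/-- The Frobenius norm of a third-order tensor. -/
def frobNorm {n₁ n₂ n₃ : ℕ} [NeZero n₃] (A : Fin n₁ → Fin n₂ → ZMod n₃ → ℝ) : ℝ :=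
  Real.sqrt (∑ i : Fin n₁, ∑ j : Fin n₂, ∑ k : ZMod n₃, (A i j k) ^ 2)

/-- The block circulant matrix of a third-order tensor. -/
def bcirc {n₁ n₂ n₃ : ℕ} (A : Fin n₁ → Fin n₂ → ZMod n₃ → ℝ) :
    Matrix (Fin n₁ × ZMod n₃) (Fin n₂ × ZMod n₃) ℝ :=
  fun p q => A p.1 q.1 (p.2 - q.2)

/-- The spectral norm of a third-order tensor: the L2 operator norm of its
block circulant matrix. -/
def specNorm {n₁ n₂ n₃ : ℕ} [NeZero n₃] (A : Fin n₁ → Fin n₂ → ZMod n₃ → ℝ) : ℝ :=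
  ‖bcirc A‖

/-- The identity tensor. -/
def tId (n n₃ : ℕ) : Fin n → Fin n → ZMod n₃ → ℝ :=
  fun i j k => if i = j ∧ k = 0 then 1 else 0

/-- The tensor transpose. -/
def tTrans {n₁ n₂ n₃ : ℕ} (A : Fin n₁ → Fin n₂ → ZMod n₃ → ℝ) :
    Fin n₂ → Fin n₁ → ZMod n₃ → ℝ :=
  fun i j k => A j i (-k)

/-- `X` is a Moore-Penrose inverse of `A`. -/
def IsMPInv {n₁ n₂ n₃ : ℕ} [NeZero n₃] (A : Fin n₁ → Fin n₂ → ZMod n₃ → ℝ)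
    (X : Fin n₂ → Fin n₁ → ZMod n₃ → ℝ) : Prop :=
  tProd (tProd A X) A = A ∧ tProd (tProd X A) X = X ∧
    tTrans (tProd A X) = tProd A X ∧ tTrans (tProd X A) = tProd X A

/-- The `i`-th DFT block of a third-order tensor. -/
def dftBlock {n₁ n₂ n₃ : ℕ} [NeZero n₃] (A : Fin n₁ → Fin n₂ → ZMod n₃ → ℝ) (i : ZMod n₃) :
    Matrix (Fin n₁) (Fin n₂) ℂ :=
  fun p q => ∑ k : ZMod n₃,
    Complex.exp (-2 * Real.pi * Complex.I * (i.val : ℂ) * (k.val : ℂ) / (n₃ : ℂ)) * (A p q k : ℂ)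

end

section PerturbedInverse

variable {R : Type*}

theorem sub_eq_neg_mul_mul_of_mul_eq_one [Ring R] {a a' e b' : R} (ha : a * a' = 1)
    (hb : b' * (a + e) = 1) : b' - a' = -(b' * e * a') :=
  calc b' - a' = b' * (a * a') - b' * (a + e) * a' := by rw [ha, hb, mul_one, one_mul]
    _ = -(b' * e * a') := by noncomm_ring

variable [SeminormedRing R] {a a' e b' : R}

theorem norm_mul_norm_le_of_mul_add_eq_one (ha : a * a' = 1) (hb : b' * (a + e) = 1)
    (h : ‖a'‖ * ‖e‖ < 1) : ‖b'‖ * ‖e‖ ≤ ‖a'‖ * ‖e‖ / (1 - ‖a'‖ * ‖e‖) := by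
  have hb' : ‖b'‖ ≤ ‖a'‖ + ‖b'‖ * ‖e‖ * ‖a'‖ :=
    calc ‖b'‖ = ‖a' - b' * e * a'‖ := by
          rw [← neg_add_eq_sub, ← sub_eq_neg_mul_mul_of_mul_eq_one ha hb, sub_add_cancel]
      _ ≤ ‖a'‖ + ‖b' * e * a'‖ := norm_sub_le _ _
      _ ≤ ‖a'‖ + ‖b'‖ * ‖e‖ * ‖a'‖ := by gcongr; exact norm_mul₃_le
  rw [le_div_iff₀ (by linarith)]
  nlinarith [mul_le_mul_of_nonneg_right hb' (norm_nonneg e)]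

theorem norm_sub_le_of_mul_add_eq_one (ha : a * a' = 1) (hb : b' * (a + e) = 1)
    (h : ‖a'‖ * ‖e‖ < 1) : ‖b' - a'‖ ≤ ‖a'‖ * ‖e‖ / (1 - ‖a'‖ * ‖e‖) * ‖a'‖ :=
  calc ‖b' - a'‖ = ‖b' * e * a'‖ := by rw [sub_eq_neg_mul_mul_of_mul_eq_one ha hb, norm_neg]
    _ ≤ ‖b'‖ * ‖e‖ * ‖a'‖ := norm_mul₃_le
    _ ≤ _ := by gcongr; exact norm_mul_norm_le_of_mul_add_eq_one ha hb h

end PerturbedInverse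

open scoped Matrix in
theorem Matrix.sum_sq_mulVec_le {m n : Type*} [Fintype m] [Fintype n] [DecidableEq n]
    (M : Matrix m n ℝ) (v : n → ℝ) : ∑ i, (M *ᵥ v) i ^ 2 ≤ ‖M‖ ^ 2 * ∑ j, v j ^ 2 := by
  have h := pow_le_pow_left₀ (norm_nonneg _) (M.l2_opNorm_mulVec (WithLp.toLp 2 v)) 2
  rw [mul_pow, EuclideanSpace.real_norm_sq_eq, EuclideanSpace.real_norm_sq_eq] at h
  simpa using h

section Tensor

variable {n₁ n₂ n₃ n₄ : ℕ}

theorem bcirc_tProd [NeZero n₃] (A : Fin n₁ → Fin n₂ → ZMod n₃ → ℝ)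
    (B : Fin n₂ → Fin n₄ → ZMod n₃ → ℝ) : bcirc (tProd A B) = bcirc A * bcirc B := by
  ext ⟨i, k⟩ ⟨j, m⟩
  simp only [bcirc, tProd, Matrix.mul_apply, Fintype.sum_prod_type]
  refine Finset.sum_congr rfl fun l _ => Fintype.sum_equiv (Equiv.addRight m) _ _ fun q => ?_
  rw [Equiv.coe_addRight, sub_add_eq_sub_sub, add_sub_cancel_right, sub_right_comm]

theorem bcirc_tId (n n₃ : ℕ) : bcirc (tId n n₃) = 1 := by
  ext ⟨i, k⟩ ⟨j, m⟩
  simp [bcirc, tId, Matrix.one_apply, Prod.ext_iff, sub_eq_zero]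

theorem bcirc_injective : Function.Injective (bcirc (n₁ := n₁) (n₂ := n₂) (n₃ := n₃)) :=
  fun A B h => funext₃ fun i j k => by simpa [bcirc] using congrFun₂ h (i, k) (j, 0)

theorem bcirc_add (A B : Fin n₁ → Fin n₂ → ZMod n₃ → ℝ) : bcirc (A + B) = bcirc A + bcirc B :=
  rfl

theorem bcirc_sub (A B : Fin n₁ → Fin n₂ → ZMod n₃ → ℝ) : bcirc (A - B) = bcirc A - bcirc B :=
  rfl

theorem bcirc_neg (A : Fin n₁ → Fin n₂ → ZMod n₃ → ℝ) : bcirc (-A) = -bcirc A :=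
  rfl

variable [NeZero n₃]

theorem frobNorm_nonneg (A : Fin n₁ → Fin n₂ → ZMod n₃ → ℝ) : 0 ≤ frobNorm A :=
  Real.sqrt_nonneg _

theorem frobNorm_neg (A : Fin n₁ → Fin n₂ → ZMod n₃ → ℝ) : frobNorm (-A) = frobNorm A := by
  simp [frobNorm]

theorem specNorm_nonneg (A : Fin n₁ → Fin n₂ → ZMod n₃ → ℝ) : 0 ≤ specNorm A :=
  norm_nonneg _

theorem specNorm_tProd_le (A : Fin n₁ → Fin n₂ → ZMod n₃ → ℝ)
    (B : Fin n₂ → Fin n₄ → ZMod n₃ → ℝ) : specNorm (tProd A B) ≤ specNorm A * specNorm B := by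
  rw [specNorm, bcirc_tProd]
  exact Matrix.l2_opNorm_mul _ _

open scoped Matrix in
theorem bcirc_mulVec_lateralSlice (C : Fin n₁ → Fin n₂ → ZMod n₃ → ℝ)
    (X : Fin n₂ → Fin n₄ → ZMod n₃ → ℝ) (j : Fin n₄) :
    bcirc C *ᵥ (fun q => X q.1 j q.2) = fun p => tProd C X p.1 j p.2 := by
  ext ⟨i, k⟩
  simp [Matrix.mulVec, dotProduct, bcirc, tProd, Fintype.sum_prod_type]

theorem frobNorm_tProd_le (C : Fin n₁ → Fin n₂ → ZMod n₃ → ℝ)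
    (X : Fin n₂ → Fin n₄ → ZMod n₃ → ℝ) : frobNorm (tProd C X) ≤ specNorm C * frobNorm X := by
  have slice (j : Fin n₄) : ∑ i, ∑ k, tProd C X i j k ^ 2 ≤
      specNorm C ^ 2 * ∑ l, ∑ m, X l j m ^ 2 := by
    simpa [specNorm, bcirc_mulVec_lateralSlice, Fintype.sum_prod_type] using
      (bcirc C).sum_sq_mulVec_le (fun q => X q.1 j q.2)
  rw [frobNorm, frobNorm, ← Real.sqrt_sq (specNorm_nonneg C), ← Real.sqrt_mul (sq_nonneg _)]
  apply Real.sqrt_le_sqrt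
  calc ∑ i, ∑ j, ∑ k, tProd C X i j k ^ 2 = ∑ j, ∑ i, ∑ k, tProd C X i j k ^ 2 :=
        Finset.sum_comm
    _ ≤ ∑ j, specNorm C ^ 2 * ∑ l, ∑ m, X l j m ^ 2 := Finset.sum_le_sum fun j _ => slice j
    _ = specNorm C ^ 2 * ∑ l, ∑ j, ∑ m, X l j m ^ 2 := by rw [← Finset.mul_sum, Finset.sum_comm]

end Tensor

theorem perturbed_inverse_diff_bound_general (n n₃ : ℕ) [NeZero n₃]
    (A Ainv E Binv : Fin n → Fin n → ZMod n₃ → ℝ)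
    (hA₁ : tProd A Ainv = tId n n₃)
    (hE : specNorm Ainv * specNorm E < 1)
    (hB₂ : tProd Binv (A + E) = tId n n₃) :
    frobNorm (Binv - Ainv) ≤
        (specNorm Ainv * specNorm E / (1 - specNorm Ainv * specNorm E)) * frobNorm Ainv ∧
      specNorm (Binv - Ainv) ≤
        (specNorm Ainv * specNorm E / (1 - specNorm Ainv * specNorm E)) * specNorm Ainv := by
  have ha : bcirc A * bcirc Ainv = 1 := by rw [← bcirc_tProd, hA₁, bcirc_tId]
  have hb : bcirc Binv * (bcirc A + bcirc E) = 1 := by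
    rw [← bcirc_add, ← bcirc_tProd, hB₂, bcirc_tId]
  have hdiff : Binv - Ainv = -tProd (tProd Binv E) Ainv := bcirc_injective <| by
    rw [bcirc_sub, bcirc_neg, bcirc_tProd, bcirc_tProd]
    exact sub_eq_neg_mul_mul_of_mul_eq_one ha hb
  refine ⟨?_, by rw [specNorm, bcirc_sub]; exact norm_sub_le_of_mul_add_eq_one ha hb hE⟩
  rw [hdiff, frobNorm_neg]
  calc frobNorm (tProd (tProd Binv E) Ainv)
      ≤ specNorm (tProd Binv E) * frobNorm Ainv := frobNorm_tProd_le _ _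
    _ ≤ specNorm Binv * specNorm E * frobNorm Ainv :=
        mul_le_mul_of_nonneg_right (specNorm_tProd_le _ _) (frobNorm_nonneg _)
    _ ≤ _ :=
        mul_le_mul_of_nonneg_right (norm_mul_norm_le_of_mul_add_eq_one ha hb hE) (frobNorm_nonneg _)

theorem perturbed_inverse_diff_bound (n n₃ : ℕ) [NeZero n₃] (hn : 0 < n)
    (A Ainv E Binv : Fin n → Fin n → ZMod n₃ → ℝ)
    (hA₁ : tProd A Ainv = tId n n₃) (hA₂ : tProd Ainv A = tId n n₃)
    (hE : specNorm Ainv * specNorm E < 1)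
    (hB₁ : tProd (A + E) Binv = tId n n₃) (hB₂ : tProd Binv (A + E) = tId n n₃) :
    frobNorm (Binv - Ainv) ≤
        (specNorm Ainv * specNorm E / (1 - specNorm Ainv * specNorm E)) * frobNorm Ainv ∧
      specNorm (Binv - Ainv) ≤
        (specNorm Ainv * specNorm E / (1 - specNorm Ainv * specNorm E)) * specNorm Ainv :=
  perturbed_inverse_diff_bound_general n n₃ A Ainv E Binv hA₁ hE hB₂
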